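/- arXiv:1807.00547 — 9 statements merged into one kernel-verified Lean document; each statement's English description precedes it below -/
import Mathlib

section
/- Let G be a subgroup of the symmetric group Sym(Ω) on a set Ω whose natural action on Ω is transitive, let α ∈ Ω, let H be the stabilizer of α in G, and let C be the centralizer of G in Sym(Ω) (i.e. the subgroup of all permutations of Ω commuting with every element of G). Then C is isomorphic, as a group, to the quotient N_G(H)/H of the normalizer of H in G by H. -/
/-!
Identify `Ω` with `G ⧸ H` via `g • α ↦ gH`. An element `n` of `N_G(H)` acts on the right,
`g • α ↦ g • n⁻¹ • α`; this is well defined because `n⁻¹ • α` has the same stabilizer `H`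
as `α`. This right action commutes with `G` and its kernel is `H`. Conversely, a permutation
`c` commuting with `G` is determined by `c α = g • α`; the stabilizer of `c α` is again `H`,
so `g ∈ N_G(H)` and `c` is the right action of `g⁻¹`.
-/

open Subgroup

namespace MulAction

variable {G X : Type*} [Group G] [MulAction G X]

theorem mem_normalizer_stabilizer_iff {x : X} {n : G} :
    n ∈ normalizer (stabilizer G x : Set G) ↔ stabilizer G (n • x) = stabilizer G x := by
  rw [mem_normalizer_iff_map_conj_eq, stabilizer_smul_eq_stabilizer_map_conj]
  rfl

theorem smul_eq_smul_of_stabilizer_le {x y : X} (hxy : stabilizer G x ≤ stabilizer G y)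
    {g g' : G} (h : g • x = g' • x) : g • y = g' • y := by
  have : g⁻¹ * g' ∈ stabilizer G y :=
    hxy (by rw [mem_stabilizer_iff, mul_smul, ← h, inv_smul_smul])
  rw [mem_stabilizer_iff, mul_smul, inv_smul_eq_iff] at this
  exact this.symm

theorem mem_centralizer_range_toPermHom_iff {c : Equiv.Perm X} :
    c ∈ centralizer (toPermHom G X).range ↔ ∀ (g : G) (y : X), c (g • y) = g • c y := by
  rw [mem_centralizer_iff, MonoidHom.coe_range, Set.forall_mem_range]
  simp only [Equiv.ext_iff, Equiv.Perm.mul_apply, toPermHom_apply, toPerm_apply]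
  exact forall₂_congr fun _ _ => eq_comm

theorem _root_.Subgroup.range_toPermHom (G : Subgroup (Equiv.Perm X)) :
    (toPermHom G X).range = G := by
  ext σ
  constructor
  · rintro ⟨g, rfl⟩
    exact g.2
  · intro hσ
    exact ⟨⟨σ, hσ⟩, rfl⟩

section Pretransitive

variable [IsPretransitive G X]

theorem forall_of_forall_smul {P : X → Prop} (x : X) (h : ∀ g : G, P (g • x)) (y : X) :
    P y := by
  obtain ⟨g, rfl⟩ := exists_smul_eq G x y
  exact h g

variable (x : X)

/-- Right multiplication by `n⁻¹` on `X ≅ G ⧸ stabilizer G x`: `g • x ↦ g • n⁻¹ • x`. -/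
noncomputable def normalizerSMulRight (n : G) (y : X) : X :=
  (exists_smul_eq G x y).choose • n⁻¹ • x

variable {x}

theorem normalizerSMulRight_smul {n : G} (hn : n ∈ normalizer (stabilizer G x : Set G))
    (g : G) : normalizerSMulRight x n (g • x) = g • n⁻¹ • x :=
  smul_eq_smul_of_stabilizer_le (mem_normalizer_stabilizer_iff.mp (inv_mem hn)).ge
    (exists_smul_eq G x (g • x)).choose_spec

variable (G x)

noncomputable def normalizerToPerm : normalizer (stabilizer G x : Set G) →* Equiv.Perm X where
  toFun n :=
    { toFun := normalizerSMulRight x (n : G)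
      invFun := normalizerSMulRight x (n⁻¹ : G)
      left_inv := forall_of_forall_smul x fun g : G => by
        simp [normalizerSMulRight_smul, n.2, smul_smul]
      right_inv := forall_of_forall_smul x fun g : G => by
        simp [normalizerSMulRight_smul, n.2, smul_smul] }
  map_one' := Equiv.ext <| forall_of_forall_smul x fun g : G => by
    simp [normalizerSMulRight_smul]
  map_mul' m n := Equiv.ext <| forall_of_forall_smul x fun g : G => by
    simp [normalizerSMulRight_smul, m.2, n.2, mul_mem m.2 n.2, smul_smul, mul_assoc]

theorem normalizerToPerm_apply_smul (n : normalizer (stabilizer G x : Set G)) (g : G) :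
    normalizerToPerm G x n (g • x) = g • (n⁻¹ : G) • x :=
  normalizerSMulRight_smul n.2 g

theorem ker_normalizerToPerm :
    (normalizerToPerm G x).ker =
      (stabilizer G x).subgroupOf (normalizer (stabilizer G x : Set G)) := by
  ext n
  rw [MonoidHom.mem_ker, mem_subgroupOf, ← inv_mem_iff, mem_stabilizer_iff]
  constructor
  · intro hn
    have h1 := normalizerToPerm_apply_smul G x n 1
    rwa [hn, one_smul, one_smul, Equiv.Perm.one_apply, eq_comm] at h1
  · intro hn
    exact Equiv.ext <| forall_of_forall_smul x fun g : G => by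
      rw [normalizerToPerm_apply_smul, hn, Equiv.Perm.one_apply]

theorem range_normalizerToPerm :
    (normalizerToPerm G x).range = centralizer (toPermHom G X).range := by
  ext c
  rw [mem_centralizer_range_toPermHom_iff]
  constructor
  · rintro ⟨n, rfl⟩ h
    exact forall_of_forall_smul x fun g : G => by
      rw [smul_smul, normalizerToPerm_apply_smul, normalizerToPerm_apply_smul, mul_smul]
  · intro hc
    obtain ⟨g, hg⟩ := exists_smul_eq G x (c x)
    have hstab : stabilizer G (g • x) = stabilizer G x := by
      ext h
      rw [mem_stabilizer_iff, mem_stabilizer_iff, hg, ← hc, c.apply_eq_iff_eq]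
    refine ⟨⟨g⁻¹, inv_mem (mem_normalizer_stabilizer_iff.mpr hstab)⟩, ?_⟩
    exact Equiv.ext <| forall_of_forall_smul x fun h : G => by
      rw [normalizerToPerm_apply_smul, inv_inv, hg, hc]

noncomputable def centralizerEquivNormalizerQuotient :
    centralizer ((toPermHom G X).range : Set (Equiv.Perm X)) ≃*
      normalizer (stabilizer G x : Set G) ⧸
        (stabilizer G x).subgroupOf (normalizer (stabilizer G x : Set G)) :=
  ((QuotientGroup.quotientMulEquivOfEq (ker_normalizerToPerm G x).symm).trans
    ((QuotientGroup.quotientKerEquivRange _).trans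
      (MulEquiv.subgroupCongr (range_normalizerToPerm G x)))).symm

end Pretransitive

end MulAction

/-- If `G` is a transitive subgroup of `Sym(Ω)`, `H` is the stabilizer of a
point `α`, and `C` is the centralizer of `G` in `Sym(Ω)`, then `C ≅ N_G(H)/H`. -/
theorem centralizer_iso_normalizer_quotient
    {Ω : Type*} (G : Subgroup (Equiv.Perm Ω)) (α : Ω)
    (htrans : MulAction.IsPretransitive G Ω)
    (H : Subgroup G) (hH : H = MulAction.stabilizer G α)
    (C : Subgroup (Equiv.Perm Ω))
    (hC : C = Subgroup.centralizer (G : Set (Equiv.Perm Ω))) :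
    Nonempty (C ≃* (Subgroup.normalizer (H : Set G) ⧸ H.subgroupOf (Subgroup.normalizer (H : Set G)))) := by
  subst hH hC
  have hC : centralizer (G : Set (Equiv.Perm Ω)) = centralizer (MulAction.toPermHom G Ω).range :=
    congrArg (centralizer ∘ SetLike.coe) G.range_toPermHom.symm
  exact ⟨(MulEquiv.subgroupCongr hC).trans (MulAction.centralizerEquivNormalizerQuotient G α)⟩
end

section
/- Let Γ be a group and θ : Γ → Sym(Ω) a group homomorphism such that the induced action of Γ on Ω is transitive. Let α ∈ Ω and let M = {g ∈ Γ | θ(g)(α) = α} be the stabilizer of α in Γ. Then the centralizer of the image θ(Γ) in Sym(Ω) is isomorphic, as a group, to N_Γ(M)/M, the quotient of the normalizer of M in Γ by M. -/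
/-!
An element `f` of the centralizer of `θ(Γ)` is determined by `f α`, because `f (θ g α) = θ g (f α)`
and `Γ` is transitive. Since `f` commutes with `θ(Γ)`, the points `α` and `f α` have the same
stabilizer `M`; so if `θ g α = f α` then `g⁻¹ M g = M`, i.e. `g⁻¹ ∈ N_Γ(M)`. Conversely, every
`n ∈ N_Γ(M)` gives the well-defined permutation `θ g α ↦ θ (g n⁻¹) α`, which commutes with `θ(Γ)`.
This is a surjective homomorphism `N_Γ(M) → C_{Sym(Ω)}(θ(Γ))` whose kernel is `M`.
-/

open Subgroup MulAction Function Equiv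

section
variable {G X : Type*} [Group G] {θ : G →* Perm X} {a : X}

local notation "Stab" => Subgroup.comap θ (stabilizer (Perm X) a)
local notation "N" => normalizer (Stab : Set G)
local notation "C" => centralizer (θ.range : Set (Perm X))

variable (θ a) in
theorem apply_eq_apply_iff_inv_mul_mem {g g' : G} : θ g a = θ g' a ↔ g⁻¹ * g' ∈ Stab := by
  rw [mem_comap, mem_stabilizer_iff, map_mul, map_inv, Perm.smul_def, Perm.mul_apply,
    Perm.inv_eq_iff_eq, eq_comm]

theorem apply_comm_of_mem_centralizer {f : Perm X} (hf : f ∈ C) (g : G) (x : X) :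
    f (θ g x) = θ g (f x) :=
  (DFunLike.congr_fun (hf _ ⟨g, rfl⟩) x).symm

theorem apply_eq_self_iff_of_mem_centralizer {f : Perm X} (hf : f ∈ C) (g : G) (x : X) :
    θ g (f x) = f x ↔ θ g x = x := by
  rw [← apply_comm_of_mem_centralizer hf, f.apply_eq_iff_eq]

theorem inv_mem_normalizer_of_apply_eq {f : Perm X} (hf : f ∈ C) {g : G} (hg : θ g a = f a) :
    g⁻¹ ∈ N :=
  mem_normalizer_iff.2 fun h ↦ by
    rw [inv_inv, mul_assoc, ← apply_eq_apply_iff_inv_mul_mem, map_mul, Perm.mul_apply, hg,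
      eq_comm, apply_eq_self_iff_of_mem_centralizer hf]
    rfl

variable (θ a)

theorem factorsThrough_mul_inv_of_mem_normalizer {n : G} (hn : n ∈ N) :
    FactorsThrough (fun g ↦ θ (g * n⁻¹) a) (fun g ↦ θ g a) := fun g g' h ↦ by
  rw [apply_eq_apply_iff_inv_mul_mem] at h ⊢
  simpa [mul_assoc] using (mem_normalizer_iff.mp hn _).mp h

noncomputable def orbitRightTranslate (n : N) : X → X :=
  extend (fun g ↦ θ g a) (fun g ↦ θ (g * (n : G)⁻¹) a) id

theorem orbitRightTranslate_apply (n : N) (g : G) :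
    orbitRightTranslate θ a n (θ g a) = θ (g * (n : G)⁻¹) a :=
  (factorsThrough_mul_inv_of_mem_normalizer θ a n.2).extend_apply _ g

variable {θ a} (hθ : Surjective fun g ↦ θ g a)
include hθ

theorem eq_of_mem_centralizer_of_apply_eq {f f' : Perm X} (hf : f ∈ C) (hf' : f' ∈ C)
    (h : f a = f' a) : f = f' :=
  Perm.ext <| hθ.forall.2 fun g ↦ by
    simp only [apply_comm_of_mem_centralizer hf, apply_comm_of_mem_centralizer hf', h]

noncomputable def normalizerToPerm : N →* Perm X where
  toFun n :=
    { toFun := orbitRightTranslate θ a n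
      invFun := orbitRightTranslate θ a n⁻¹
      left_inv := hθ.forall.2 fun g ↦ by
        simp only [orbitRightTranslate_apply, coe_inv, inv_inv, inv_mul_cancel_right]
      right_inv := hθ.forall.2 fun g ↦ by
        simp only [orbitRightTranslate_apply, coe_inv, inv_inv, mul_inv_cancel_right] }
  map_one' := Perm.ext <| hθ.forall.2 fun g ↦ by
    simp only [coe_fn_mk, orbitRightTranslate_apply, coe_one, inv_one, mul_one, Perm.one_apply]
  map_mul' n m := Perm.ext <| hθ.forall.2 fun g ↦ by
    simp only [coe_fn_mk, Perm.coe_mul, comp_apply, orbitRightTranslate_apply, coe_mul, mul_inv_rev,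
      mul_assoc]

theorem normalizerToPerm_apply (n : N) (g : G) :
    normalizerToPerm hθ n (θ g a) = θ (g * (n : G)⁻¹) a :=
  orbitRightTranslate_apply θ a n g

theorem normalizerToPerm_apply_self (n : N) : normalizerToPerm hθ n a = θ (n : G)⁻¹ a := by
  simpa only [map_one, Perm.one_apply, one_mul] using normalizerToPerm_apply hθ n 1

theorem normalizerToPerm_mem_centralizer (n : N) : normalizerToPerm hθ n ∈ C := by
  rintro _ ⟨h, rfl⟩
  refine Perm.ext <| hθ.forall.2 fun g ↦ ?_
  have hθmul (k l : G) : θ k (θ l a) = θ (k * l) a := by rw [map_mul, Perm.mul_apply]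
  rw [Perm.mul_apply, Perm.mul_apply, hθmul, normalizerToPerm_apply, normalizerToPerm_apply, hθmul,
    mul_assoc]

noncomputable def normalizerToCentralizer : N →* C :=
  (normalizerToPerm hθ).codRestrict _ (normalizerToPerm_mem_centralizer hθ)

theorem coe_normalizerToCentralizer (n : N) :
    (normalizerToCentralizer hθ n : Perm X) = normalizerToPerm hθ n :=
  rfl

theorem ker_normalizerToCentralizer :
    (normalizerToCentralizer hθ).ker = (Stab).subgroupOf N := by
  ext n
  rw [MonoidHom.mem_ker, mem_subgroupOf, ← inv_mem_iff, mem_comap, mem_stabilizer_iff,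
    Perm.smul_def, ← normalizerToPerm_apply_self hθ, Subtype.ext_iff, coe_normalizerToCentralizer,
    OneMemClass.coe_one]
  refine ⟨fun h ↦ by rw [h, Perm.one_apply], fun h ↦ ?_⟩
  exact eq_of_mem_centralizer_of_apply_eq hθ (normalizerToPerm_mem_centralizer hθ n) (one_mem _) h

theorem normalizerToCentralizer_surjective : Surjective (normalizerToCentralizer hθ) := by
  rintro ⟨f, hf⟩
  obtain ⟨g, hg⟩ := hθ (f a)
  refine ⟨⟨g⁻¹, inv_mem_normalizer_of_apply_eq hf hg⟩, Subtype.ext ?_⟩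
  refine eq_of_mem_centralizer_of_apply_eq hθ (normalizerToPerm_mem_centralizer hθ _) hf ?_
  rw [coe_normalizerToCentralizer, normalizerToPerm_apply_self, inv_inv]
  exact hg

end

/-- If `θ : Γ → Sym(Ω)` gives a transitive action on `Ω` and `M` is the
stabilizer of `α` in `Γ`, then the centralizer of `θ(Γ)` in `Sym(Ω)` is isomorphic to
`N_Γ(M)/M`. -/
theorem centralizer_image_iso_normalizer_quotient
    {Ω : Type*} {Γ : Type*} [Group Γ] (θ : Γ →* Equiv.Perm Ω)
    (htrans : ∀ ω₁ ω₂ : Ω, ∃ g : Γ, θ g ω₁ = ω₂)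
    (α : Ω) (M : Subgroup Γ) (hM : M = Subgroup.comap θ (MulAction.stabilizer (Equiv.Perm Ω) α)) :
    Nonempty (Subgroup.centralizer ((θ.range : Subgroup (Equiv.Perm Ω)) : Set (Equiv.Perm Ω))
      ≃* (Subgroup.normalizer (M : Set Γ) ⧸ M.subgroupOf (Subgroup.normalizer (M : Set Γ)))) := by
  subst hM
  have hθ : Surjective fun g ↦ θ g α := htrans α
  exact ⟨((QuotientGroup.quotientMulEquivOfEq (ker_normalizerToCentralizer hθ)).symm.trans
    (QuotientGroup.quotientKerEquivOfSurjective _ (normalizerToCentralizer_surjective hθ))).symm⟩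
end

section
/- Let Γ be a group such that for all natural numbers a and d there exists a maximal subgroup N of Γ of finite index whose normal core K in Γ satisfies |N : K| > a, and which admits a surjective group homomorphism onto the free group F_d of rank d. Then Γ has the finite automorphism realisation property: for every finite group A there exists a subgroup M of Γ of finite index such that N_Γ(M)/M is isomorphic to A. -/
/-!
Given a finite group `A`, pick `d` with `F_d ↠ A` and a maximal subgroup `N` with `N ↠ F_d` and
`|N : K| > |A|`. The kernel `M` of the composite `N ↠ A` is normal in `N`, so by maximality
its normalizer is `N` or `Γ`. In the second case `M` is normal in `Γ`, hence contained in the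
core `K`, so `|N : K| ≤ |N : M| = |A|`, contradicting the choice of `N`. Hence `N_Γ(M) = N`,
and `N_Γ(M)/M ≅ N/M ≅ A`.
-/

theorem FreeGroup.exists_surjective_of_finite (A : Type*) [Group A] [Finite A] :
    ∃ (d : ℕ) (π : FreeGroup (Fin d) →* A), Function.Surjective π := by
  obtain ⟨d, ⟨e⟩⟩ := Finite.exists_equiv_fin A
  exact ⟨d, FreeGroup.lift e.symm, FreeGroup.lift_surjective_of_surjective e.symm.surjective⟩

namespace Subgroup

variable {G A : Type*} [Group G] [Group A]

theorem subgroupOf_map_subtype_self {N : Subgroup G} (K : Subgroup N) :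
    (K.map N.subtype).subgroupOf N = K :=
  comap_map_eq_self_of_injective N.subtype_injective K

theorem relIndex_map_subtype_ker {N : Subgroup G} {φ : N →* A} (hφ : Function.Surjective φ) :
    (φ.ker.map N.subtype).relIndex N = Nat.card A := by
  rw [relIndex, subgroupOf_map_subtype_self, index_ker, φ.range_eq_top_of_surjective hφ, card_top]

theorem relIndex_normalCore_le {M N : Subgroup G} [M.Normal] (hMN : M ≤ N)
    (hM : M.relIndex N ≠ 0) : N.normalCore.relIndex N ≤ M.relIndex N :=
  relIndex_le_of_le_left (normal_le_normalCore.mpr hMN) hM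

theorem normalizer_eq_of_isCoatom {M N : Subgroup G} (hN : IsCoatom N) (hMN : M ≤ N)
    [(M.subgroupOf N).Normal] (hM : M.relIndex N ≠ 0)
    (hlt : M.relIndex N < N.normalCore.relIndex N) : normalizer (M : Set G) = N := by
  rcases (le_normalizer_of_normal_subgroupOf hMN).lt_or_eq with hNlt | heq
  · have : M.Normal := normalizer_eq_top_iff.mp (hN.2 _ hNlt)
    exact absurd (relIndex_normalCore_le hMN hM) hlt.not_ge
  · exact heq.symm

/-- `rw [h]` cannot do this: the normality instance of `M.subgroupOf H` is tied to `H`. -/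
def quotientSubgroupOfEquivOfEq (M : Subgroup G) {H K : Subgroup G} (h : H = K)
    [(M.subgroupOf H).Normal] [(M.subgroupOf K).Normal] :
    H ⧸ M.subgroupOf H ≃* K ⧸ M.subgroupOf K := by
  subst h
  exact MulEquiv.refl _

end Subgroup

open Subgroup in
/-- Proposition on the FARP. If for all `a d : ℕ` the group `Γ` has a
maximal subgroup `N` of finite index with `|N : K| > a` (where `K` is the normal core of
`N` in `Γ`) admitting an epimorphism onto the free group of rank `d`, then every finite
group `A` is isomorphic to `N_Γ(M)/M` for some finite-index subgroup `M ≤ Γ`. -/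
theorem farp_of_maximal_subgroups
    {Γ : Type*} [Group Γ]
    (h : ∀ a d : ℕ, ∃ N : Subgroup Γ, IsCoatom N ∧ N.index ≠ 0 ∧
      a < N.normalCore.relIndex N ∧ ∃ f : N →* FreeGroup (Fin d), Function.Surjective f) :
    ∀ (A : Type*) [Group A] [Finite A], ∃ M : Subgroup Γ, M.index ≠ 0 ∧
      Nonempty ((Subgroup.normalizer (M : Set Γ) ⧸ M.subgroupOf (Subgroup.normalizer (M : Set Γ))) ≃* A) := by
  intro A _ _
  obtain ⟨d, π, hπ⟩ := FreeGroup.exists_surjective_of_finite A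
  obtain ⟨N, hN, hNidx, hcore, f, hf⟩ := h (Nat.card A) d
  set φ := π.comp f
  have hφ : Function.Surjective φ := hπ.comp hf
  set M := φ.ker.map N.subtype
  have hMrel : M.relIndex N = Nat.card A := relIndex_map_subtype_ker hφ
  have hMnormal : (M.subgroupOf N).Normal := by
    rw [subgroupOf_map_subtype_self]
    infer_instance
  have hnorm : normalizer (M : Set Γ) = N :=
    normalizer_eq_of_isCoatom hN (map_subtype_le _) (hMrel ▸ Nat.card_pos.ne') (hMrel ▸ hcore)
  refine ⟨M, ?_, ?_⟩
  · rw [← relIndex_mul_index (map_subtype_le _), hMrel]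
    exact mul_ne_zero Nat.card_pos.ne' hNidx
  · exact ⟨(quotientSubgroupOfEquivOfEq M hnorm).trans <|
      (QuotientGroup.quotientMulEquivOfEq (subgroupOf_map_subtype_self φ.ker)).trans
        (QuotientGroup.quotientKerEquivOfSurjective φ hφ)⟩
end

section
/- Let Γ be a group having a maximal subgroup N which is not normal in Γ and which admits a surjective group homomorphism onto the free group F_∞ of countably infinite rank. Then Γ has the countable automorphism realisation property: for every countable group A there exists a subgroup M of Γ such that N_Γ(M)/M is isomorphic to A. -/
/-!
Pick `c ∈ N` with a conjugate `g c g⁻¹ ∉ N`. Since `φ c` involves only finitely many generators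
of `F_∞`, there is an epimorphism `F_∞ → A` killing them, hence an epimorphism `χ : N → A` with
`c ∈ M := ker χ`. Then `N ≤ N_Γ(M)`, and `N_Γ(M) ≠ Γ` because `M` is not normal (it contains `c`
but not `g c g⁻¹`); by maximality `N_Γ(M) = N`, so `N_Γ(M)/M = N / ker χ ≅ A`.
-/

namespace FreeGroup

theorem exists_forall_lift_eq_one {G : Type*} [Group G] (w : FreeGroup ℕ) :
    ∃ n, ∀ f : ℕ → G, (∀ i < n, f i = 1) → lift f w = 1 := by
  induction w with
  | C1 => exact ⟨0, fun f _ => (lift f).map_one⟩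
  | of i => exact ⟨i + 1, fun f hf => by simp [hf i (Nat.lt_succ_self i)]⟩
  | inv_of i ih =>
    obtain ⟨n, hn⟩ := ih
    exact ⟨n, fun f hf => by rw [MonoidHom.map_inv, hn f hf, inv_one]⟩
  | mul x y hx hy =>
    obtain ⟨m, hm⟩ := hx
    obtain ⟨n, hn⟩ := hy
    refine ⟨max m n, fun f hf => ?_⟩
    rw [MonoidHom.map_mul, hm f fun i hi => hf i (by omega), hn f fun i hi => hf i (by omega),
      one_mul]

theorem exists_surjective_hom_eq_one {A : Type*} [Group A] [Countable A] (w : FreeGroup ℕ) :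
    ∃ ψ : FreeGroup ℕ →* A, Function.Surjective ψ ∧ ψ w = 1 := by
  obtain ⟨e, he⟩ := exists_surjective_nat A
  obtain ⟨n, hn⟩ := exists_forall_lift_eq_one (G := A) w
  refine ⟨lift fun i => if i < n then 1 else e (i - n), fun a => ?_, hn _ fun i hi => if_pos hi⟩
  obtain ⟨k, rfl⟩ := he a
  exact ⟨of (k + n), by simp⟩

end FreeGroup

namespace Subgroup

variable {Γ : Type*} [Group Γ]

theorem le_normalizer_map_subtype {N : Subgroup Γ} (K : Subgroup N) [K.Normal] :
    N ≤ normalizer (K.map N.subtype : Set Γ) := by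
  have : ((K.map N.subtype).subgroupOf N).Normal := by
    rwa [subgroupOf, comap_map_eq_self_of_injective N.subtype_injective]
  exact le_normalizer_of_normal_subgroupOf (map_subtype_le K)

theorem normalizer_eq_of_isCoatom_s4 {N M : Subgroup Γ} (hN : IsCoatom N)
    (hle : N ≤ normalizer (M : Set Γ)) (hM : ¬ M.Normal) : normalizer (M : Set Γ) = N :=
  (hle.eq_or_lt.resolve_right fun hlt => hM (normalizer_eq_top_iff.mp (hN.2 _ hlt))).symm

theorem nonempty_quotient_subgroupOf_mulEquiv_of_eq {H K : Subgroup Γ} (M : Subgroup Γ)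
    (h : H = K) [(M.subgroupOf H).Normal] [(M.subgroupOf K).Normal] :
    Nonempty ((H ⧸ M.subgroupOf H) ≃* (K ⧸ M.subgroupOf K)) := by
  subst h
  exact ⟨.refl _⟩

theorem nonempty_normalizer_quotient_mulEquiv {A : Type*} [Group A] {N : Subgroup Γ}
    (hN : IsCoatom N) (χ : N →* A) (hχ : Function.Surjective χ)
    (hM : ¬ (χ.ker.map N.subtype).Normal) :
    Nonempty (normalizer (χ.ker.map N.subtype : Set Γ) ⧸
      (χ.ker.map N.subtype).subgroupOf (normalizer (χ.ker.map N.subtype : Set Γ)) ≃* A) := by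
  have hMN : (χ.ker.map N.subtype).subgroupOf N = χ.ker :=
    comap_map_eq_self_of_injective N.subtype_injective χ.ker
  have : ((χ.ker.map N.subtype).subgroupOf N).Normal := by rw [hMN]; infer_instance
  obtain ⟨e⟩ := nonempty_quotient_subgroupOf_mulEquiv_of_eq (χ.ker.map N.subtype)
    (normalizer_eq_of_isCoatom_s4 hN (le_normalizer_map_subtype χ.ker) hM)
  exact ⟨e.trans ((QuotientGroup.quotientMulEquivOfEq hMN).trans
    (QuotientGroup.quotientKerEquivOfSurjective χ hχ))⟩

end Subgroup

/-- Proposition on the CARP. If `Γ` has a non-normal maximal subgroup `N`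
with an epimorphism `N → F_∞`, then every countable group `A` is isomorphic to `N_Γ(M)/M`
for some subgroup `M ≤ Γ`. -/
theorem carp_of_maximal_subgroup
    {Γ : Type*} [Group Γ] (N : Subgroup Γ) (hmax : IsCoatom N) (hnn : ¬ N.Normal)
    (φ : N →* FreeGroup ℕ) (hφ : Function.Surjective φ) :
    ∀ (A : Type*) [Group A] [Countable A], ∃ M : Subgroup Γ,
      Nonempty ((Subgroup.normalizer (M : Set Γ) ⧸ M.subgroupOf (Subgroup.normalizer (M : Set Γ))) ≃* A) := by
  intro A _ _
  obtain ⟨c, hcN, g, hg⟩ : ∃ c ∈ N, ∃ g : Γ, g * c * g⁻¹ ∉ N := by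
    by_contra! h
    exact hnn ⟨h⟩
  obtain ⟨ψ, hψ, hψc⟩ := FreeGroup.exists_surjective_hom_eq_one (A := A) (φ ⟨c, hcN⟩)
  have hcM : c ∈ (ψ.comp φ).ker.map N.subtype := ⟨⟨c, hcN⟩, hψc, rfl⟩
  exact ⟨_, Subgroup.nonempty_normalizer_quotient_mulEquiv hmax (ψ.comp φ) (hψ.comp hφ)
    fun hM => hg (Subgroup.map_subtype_le _ (hM.conj_mem c hcM g))⟩
end

section
/- Let Γ be a group admitting a surjective group homomorphism onto a non-abelian free group, i.e. onto FreeGroup ι for some type ι having at least two distinct elements. Then for every countable group A there exists a subgroup M of Γ such that N_Γ(M)/M is isomorphic to A. -/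
/-!
Retract `Γ` onto the free group `F` on `x = of false` and `y = of true`, and enumerate `A` by a
surjection `u : ℤ → A`. Let `F` act on `ℤ × A`: `x` shifts `ℤ` by one, `y` permutes `ℤ` by a
permutation whose only cycles of length at most two are `{0}` and `{1, 2}`, and when leaving `3q`
it multiplies the `A`-coordinate on the left by `u q`. This action commutes with right
multiplication on `A`, so all points of a fibre `{n} × A` have the same stabilizer.

Let `M` be the stabilizer of `(0, 1)`. If `g` normalizes `M`, then `M` fixes `g • (0, 1)`; as
`x⁻¹y²x` and its conjugate by `y` lie in `M` and have no common fixed point off the fibre over `0`,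
`g` preserves that fibre. Conversely every such `g` normalizes `M`. So the normalizer acts on the
fibre by right multiplications by elements of `A`, with kernel `M`, and the loops
`x^(-3q) y³ x^(3q)` realise every `u q`.
-/

open Function MulAction

namespace NormalizerQuotient

section RightMulEquivariant

variable {G X : Type*} [Group G]

abbrev stabilizerVia (ρ : G →* Equiv.Perm X) (x : X) : Subgroup G :=
  (stabilizer (Equiv.Perm X) x).comap ρ

theorem mem_stabilizerVia {ρ : G →* Equiv.Perm X} {x : X} {g : G} :
    g ∈ stabilizerVia ρ x ↔ ρ g x = x := Iff.rfl

variable {V A : Type*} [Group A]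

def IsRightMulEquivariant (ρ : G →* Equiv.Perm (V × A)) : Prop :=
  ∀ g p a, ρ g (p.1, p.2 * a) = ((ρ g p).1, (ρ g p).2 * a)

variable {ρ : G →* Equiv.Perm (V × A)} {v₀ : V}

theorem IsRightMulEquivariant.apply_mk_eq_self_iff (hρ : IsRightMulEquivariant ρ)
    (g : G) (v : V) (a : A) : ρ g (v, a) = (v, a) ↔ ρ g (v, 1) = (v, 1) := by
  have h := hρ g (v, 1) a
  rw [one_mul] at h
  rw [h, Prod.ext_iff, Prod.ext_iff]
  simp

theorem fst_apply_eq_of_mem_normalizer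
    (hrigid : ∀ p : V × A, stabilizerVia ρ (v₀, 1) ≤ stabilizerVia ρ p → p.1 = v₀)
    {g : G} (hg : g ∈ Subgroup.normalizer (stabilizerVia ρ (v₀, (1 : A)) : Set G)) :
    (ρ g (v₀, 1)).1 = v₀ := by
  refine hrigid _ fun m hm => ?_
  have hconj : g⁻¹ * m * g ∈ stabilizerVia ρ (v₀, (1 : A)) :=
    (Subgroup.mem_normalizer_iff''.mp hg m).mp hm
  simpa [Equiv.Perm.mul_apply] using congrArg (ρ g) hconj

theorem mem_normalizer_of_fst_apply_eq (hρ : IsRightMulEquivariant ρ)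
    {g : G} (hg : (ρ g (v₀, 1)).1 = v₀) :
    g ∈ Subgroup.normalizer (stabilizerVia ρ (v₀, (1 : A)) : Set G) := by
  have hinv : ρ g⁻¹ (v₀, 1) = (v₀, (ρ g (v₀, 1)).2⁻¹) := by
    rw [map_inv, Equiv.Perm.inv_eq_iff_eq]
    have := hρ g (v₀, 1) (ρ g (v₀, 1)).2⁻¹
    simp_all
  refine Subgroup.mem_normalizer_iff.mpr fun m => ?_
  rw [mem_stabilizerVia, mem_stabilizerVia, map_mul, map_mul, Equiv.Perm.mul_apply,
    Equiv.Perm.mul_apply, ← (ρ g).eq_symm_apply, ← Equiv.Perm.inv_def, ← map_inv, hinv]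
  exact (hρ.apply_mk_eq_self_iff m v₀ _).symm

theorem nonempty_quotient_normalizer_stabilizerVia_mulEquiv (hρ : IsRightMulEquivariant ρ)
    (hlabel : ∀ a : A, ∃ g, ρ g (v₀, 1) = (v₀, a))
    (hrigid : ∀ p : V × A, stabilizerVia ρ (v₀, 1) ≤ stabilizerVia ρ p → p.1 = v₀) :
    Nonempty ((Subgroup.normalizer (stabilizerVia ρ (v₀, (1 : A)) : Set G) ⧸
      (stabilizerVia ρ (v₀, 1)).subgroupOf
        (Subgroup.normalizer (stabilizerVia ρ (v₀, 1) : Set G))) ≃* A) := by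
  set M := stabilizerVia ρ (v₀, (1 : A))
  have hfibre (g : Subgroup.normalizer (M : Set G)) : ρ g (v₀, 1) = (v₀, (ρ g (v₀, 1)).2) :=
    Prod.ext (fst_apply_eq_of_mem_normalizer hrigid g.2) rfl
  let θ : Subgroup.normalizer (M : Set G) →* A := MonoidHom.mk' (fun g => (ρ g (v₀, 1)).2)
    fun g h => by
      have := hρ g (v₀, 1) (ρ h (v₀, 1)).2
      rw [one_mul] at this
      rw [Subgroup.coe_mul, map_mul, Equiv.Perm.mul_apply, hfibre h, this]
  have hθ : Surjective θ := fun a => by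
    obtain ⟨g, hg⟩ := hlabel a
    exact ⟨⟨g, mem_normalizer_of_fst_apply_eq hρ (by rw [hg])⟩, by simp [θ, hg]⟩
  have hker : θ.ker = M.subgroupOf (Subgroup.normalizer (M : Set G)) := by
    ext g
    rw [MonoidHom.mem_ker, Subgroup.mem_subgroupOf, mem_stabilizerVia, hfibre g, Prod.ext_iff]
    simp [θ]
  exact ⟨(QuotientGroup.quotientMulEquivOfEq hker.symm).trans
    (QuotientGroup.quotientKerEquivOfSurjective θ hθ)⟩

end RightMulEquivariant

/-- The permutation of `ℤ` fixing `0`, swapping `1` and `2`, and cycling every other block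
`3q ↦ 3q + 1 ↦ 3q + 2 ↦ 3q`. -/
def blockPerm : Equiv.Perm ℤ where
  toFun n := if 0 ≤ n ∧ n ≤ 2 then (3 - n) % 3 else if n % 3 = 2 then n - 2 else n + 1
  invFun n := if 0 ≤ n ∧ n ≤ 2 then (3 - n) % 3 else if n % 3 = 0 then n + 2 else n - 1
  left_inv n := by dsimp only; split_ifs <;> omega
  right_inv n := by dsimp only; split_ifs <;> omega

@[simp] theorem blockPerm_zero : blockPerm 0 = 0 := rfl
@[simp] theorem blockPerm_one : blockPerm 1 = 2 := rfl
@[simp] theorem blockPerm_two : blockPerm 2 = 1 := rfl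
@[simp] theorem blockPerm_symm_zero : blockPerm.symm 0 = 0 := rfl

theorem blockPerm_apply_mul_three {q : ℤ} (hq : q ≠ 0) (r : ℤ) (hr : 0 ≤ r ∧ r ≤ 2) :
    blockPerm (3 * q + r) = 3 * q + (r + 1) % 3 := by
  simp only [blockPerm, Equiv.coe_fn_mk]; split_ifs <;> omega

theorem blockPerm_blockPerm_add_one_sub_one_eq_iff (v : ℤ) :
    blockPerm (blockPerm (v + 1)) - 1 = v ↔ v = -1 ∨ v = 0 ∨ v = 1 := by
  simp only [blockPerm, Equiv.coe_fn_mk]; split_ifs <;> omega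

section LabelledAction

variable {A : Type*}

def labelledShift : Equiv.Perm (ℤ × A) := (Equiv.addRight 1).prodCongr (Equiv.refl A)

@[simp] theorem labelledShift_apply (n : ℤ) (y : A) : labelledShift (n, y) = (n + 1, y) := rfl

@[simp] theorem labelledShift_symm_apply (n : ℤ) (y : A) :
    labelledShift.symm (n, y) = (n - 1, y) := rfl

theorem labelledShift_zpow_apply (k n : ℤ) (y : A) : (labelledShift ^ k) (n, y) = (n + k, y) := by
  induction k using Int.induction_on generalizing n with
  | zero => simp
  | succ k ih => rw [zpow_add_one, Equiv.Perm.mul_apply, labelledShift_apply, ih]; ring_nf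
  | pred k ih =>
    rw [zpow_sub_one, Equiv.Perm.mul_apply, Equiv.Perm.inv_def, labelledShift_symm_apply, ih]
    ring_nf

variable [Group A]

def blockLabel (u : ℤ → A) (n : ℤ) : A := if n % 3 = 0 then u (n / 3) else 1

def labelledBlockPerm (u : ℤ → A) : Equiv.Perm (ℤ × A) :=
  Equiv.prodShear blockPerm fun n => Equiv.mulLeft (blockLabel u n)

@[simp] theorem labelledBlockPerm_apply (u : ℤ → A) (n : ℤ) (y : A) :
    labelledBlockPerm u (n, y) = (blockPerm n, blockLabel u n * y) := rfl

@[simp] theorem labelledBlockPerm_symm_apply (u : ℤ → A) (n : ℤ) (y : A) :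
    (labelledBlockPerm u).symm (n, y) =
      (blockPerm.symm n, (blockLabel u (blockPerm.symm n))⁻¹ * y) := rfl

theorem labelledBlockPerm_pow_three_apply (u : ℤ → A) {q : ℤ} (hq : q ≠ 0) (y : A) :
    (labelledBlockPerm u ^ 3) (3 * q, y) = (3 * q, u q * y) := by
  have h₀ : blockPerm (3 * q) = 3 * q + 1 := by simpa using blockPerm_apply_mul_three hq 0
  have h₁ : blockPerm (3 * q + 1) = 3 * q + 2 := blockPerm_apply_mul_three hq 1 (by omega)
  have h₂ : blockPerm (3 * q + 2) = 3 * q := by simpa using blockPerm_apply_mul_three hq 2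
  have hl₀ : blockLabel u (3 * q) = u q := by simp [blockLabel]
  have hl₁ : blockLabel u (3 * q + 1) = 1 := if_neg (by omega)
  have hl₂ : blockLabel u (3 * q + 2) = 1 := if_neg (by omega)
  simp [pow_succ, h₀, h₁, h₂, hl₀, hl₁, hl₂]

def labelledAction (u : ℤ → A) : FreeGroup Bool →* Equiv.Perm (ℤ × A) :=
  FreeGroup.lift fun i => bif i then labelledBlockPerm u else labelledShift

@[simp] theorem labelledAction_of_false (u : ℤ → A) :
    labelledAction u (FreeGroup.of false) = labelledShift := by simp [labelledAction]

@[simp] theorem labelledAction_of_true (u : ℤ → A) :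
    labelledAction u (FreeGroup.of true) = labelledBlockPerm u := by simp [labelledAction]

theorem isRightMulEquivariant_labelledAction (u : ℤ → A) :
    IsRightMulEquivariant (labelledAction u) := by
  intro g p a
  set R := Set.range fun a : A => (Equiv.refl ℤ).prodCongr (Equiv.mulRight a)
  have hgen :
      ∀ i, (bif i then labelledBlockPerm u else labelledShift) ∈ Subgroup.centralizer R := by
    rintro i - ⟨a, rfl⟩
    cases i <;> ext ⟨n, y⟩ <;> simp [labelledBlockPerm, labelledShift, mul_assoc]
  have hg : labelledAction u g ∈ Subgroup.centralizer R :=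
    FreeGroup.range_lift_le (Set.range_subset_iff.2 hgen) ⟨g, rfl⟩
  simpa [Prod.map] using (congrArg (· p) (Subgroup.mem_centralizer_iff.mp hg _ ⟨a, rfl⟩)).symm

theorem labelledAction_loop_apply (u : ℤ → A) {q : ℤ} (hq : q ≠ 0) :
    labelledAction u
      ((FreeGroup.of false ^ (3 * q))⁻¹ * FreeGroup.of true ^ 3 * FreeGroup.of false ^ (3 * q))
      (0, 1) = (0, u q) := by
  rw [← zpow_neg]
  simp only [map_mul, map_zpow, map_pow, Equiv.Perm.mul_apply, labelledAction_of_false,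
    labelledAction_of_true, labelledShift_zpow_apply, zero_add,
    labelledBlockPerm_pow_three_apply u hq]
  simp

theorem exists_labelledAction_apply_eq (u : ℤ → A) (hu : Surjective u) (a : A) :
    ∃ g, labelledAction u g (0, 1) = (0, a) := by
  obtain ⟨q, rfl⟩ := hu a
  rcases eq_or_ne q 0 with rfl | hq
  · exact ⟨FreeGroup.of true, by simp [blockLabel]⟩
  · exact ⟨_, labelledAction_loop_apply u hq⟩

theorem fst_eq_zero_of_stabilizerVia_le (u : ℤ → A) (p : ℤ × A)
    (hp : stabilizerVia (labelledAction u) (0, 1) ≤ stabilizerVia (labelledAction u) p) :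
    p.1 = 0 := by
  set x : FreeGroup Bool := FreeGroup.of false
  set y : FreeGroup Bool := FreeGroup.of true
  have hswap : x⁻¹ * y ^ 2 * x ∈ stabilizerVia (labelledAction u) (0, 1) := by
    simp [x, y, Equiv.Perm.mul_apply, pow_two, blockLabel]
  have hconj : y * (x⁻¹ * y ^ 2 * x) * y⁻¹ ∈ stabilizerVia (labelledAction u) (0, 1) := by
    simp [x, y, Equiv.Perm.mul_apply, pow_two, blockLabel]
  have h₁ := congrArg Prod.fst (mem_stabilizerVia.mp (hp hswap))
  have h₂ := congrArg Prod.fst (mem_stabilizerVia.mp (hp hconj))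
  obtain ⟨v, c⟩ := p
  show v = 0
  simp only [x, y, pow_two, map_mul, map_inv, labelledAction_of_false, labelledAction_of_true,
    Equiv.Perm.mul_apply, Equiv.Perm.coe_inv, labelledShift_apply, labelledShift_symm_apply,
    labelledBlockPerm_apply, labelledBlockPerm_symm_apply] at h₁ h₂
  rw [blockPerm_blockPerm_add_one_sub_one_eq_iff] at h₁
  rw [← Equiv.eq_symm_apply, blockPerm_blockPerm_add_one_sub_one_eq_iff] at h₂
  rcases h₁ with rfl | rfl | rfl <;> revert h₂ <;> decide

end LabelledAction

theorem exists_nonempty_quotient_normalizer_mulEquiv {G : Type*} [Group G]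
    (f : G →* FreeGroup Bool) (hf : Surjective f) (A : Type*) [Group A] [Countable A] :
    ∃ M : Subgroup G,
      Nonempty ((Subgroup.normalizer (M : Set G) ⧸ M.subgroupOf (Subgroup.normalizer (M : Set G)))
        ≃* A) := by
  obtain ⟨e, he⟩ := exists_surjective_nat A
  set u : ℤ → A := e ∘ Int.toNat
  have hu : Surjective u := he.comp fun n => ⟨n, Int.toNat_natCast n⟩
  refine ⟨_, nonempty_quotient_normalizer_stabilizerVia_mulEquiv (ρ := (labelledAction u).comp f)
    (v₀ := 0) (fun g => isRightMulEquivariant_labelledAction u (f g)) (fun a => ?_)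
    fun p hp => ?_⟩
  · obtain ⟨w, hw⟩ := exists_labelledAction_apply_eq u hu a
    obtain ⟨g, rfl⟩ := hf w
    exact ⟨g, hw⟩
  · exact fst_eq_zero_of_stabilizerVia_le u p ((Subgroup.comap_le_comap_of_surjective hf).mp hp)

end NormalizerQuotient

/-- A group with an epimorphism onto a non-abelian free group has the
countable automorphism realisation property. -/
theorem carp_of_free_quotient
    {Γ : Type*} [Group Γ] {ι : Type*} (a b : ι) (hab : a ≠ b)
    (φ : Γ →* FreeGroup ι) (hφ : Function.Surjective φ) :
    ∀ (A : Type*) [Group A] [Countable A], ∃ M : Subgroup Γ,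
      Nonempty ((Subgroup.normalizer (M : Set Γ) ⧸ M.subgroupOf (Subgroup.normalizer (M : Set Γ))) ≃* A) := by
  classical
  have hretract : Surjective (FreeGroup.map fun i => decide (i = b)) :=
    FreeGroup.map_surjective fun x => ⟨bif x then b else a, by cases x <;> simp [hab]⟩
  exact NormalizerQuotient.exists_nonempty_quotient_normalizer_mulEquiv
    ((FreeGroup.map fun i => decide (i = b)).comp φ) (hretract.comp hφ)
end

section
/- Let x ∈ Sym(ℤ) be the translation i ↦ i + 1 and let y ∈ Sym(ℤ) be the transposition swapping 0 and 1. Then the subgroup of Sym(ℤ) generated by {x, y} is exactly the group of almost-translations: a permutation σ of ℤ lies in the subgroup generated by x and y if and only if there exists k ∈ ℤ such that the set {i ∈ ℤ | σ(i) ≠ i + k} is finite. -/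
open Equiv Subgroup Set

private lemma swap_trans_closure (M : Subgroup (Equiv.Perm ℤ)) {a b c : ℤ}
    (hab : Equiv.swap a b ∈ M) (hbc : Equiv.swap b c ∈ M) : Equiv.swap a c ∈ M :=
  SubmonoidClass.swap_mem_trans M hab hbc

private lemma adjacent_swap_mem (n : ℤ) :
    Equiv.swap n (n + 1) ∈ Subgroup.closure
      ({Equiv.addRight (1:ℤ), Equiv.swap 0 1} : Set (Equiv.Perm ℤ)) := by
  set S : Set (Equiv.Perm ℤ) := {Equiv.addRight (1:ℤ), Equiv.swap 0 1}
  have hx : Equiv.addRight (1:ℤ) ∈ Subgroup.closure S := subset_closure (by simp [S])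
  have hy : Equiv.swap (0:ℤ) 1 ∈ Subgroup.closure S := subset_closure (by simp [S])
  have hxn : (Equiv.addRight (1:ℤ)) ^ n ∈ Subgroup.closure S := zpow_mem hx n
  have key : Equiv.swap n (n + 1)
      = (Equiv.addRight (1:ℤ))^n * Equiv.swap 0 1 * ((Equiv.addRight (1:ℤ))^n)⁻¹ := by
    rw [← Equiv.swap_apply_apply]
    simp [add_comm]
  rw [key]
  exact mul_mem (mul_mem hxn hy) (inv_mem hxn)

private lemma swap_mem (a b : ℤ) :
    Equiv.swap a b ∈ Subgroup.closure
      ({Equiv.addRight (1:ℤ), Equiv.swap 0 1} : Set (Equiv.Perm ℤ)) := by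
  have main : ∀ m : ℕ, ∀ a : ℤ, Equiv.swap a (a + m) ∈ Subgroup.closure
      ({Equiv.addRight (1:ℤ), Equiv.swap 0 1} : Set (Equiv.Perm ℤ)) := by
    intro m
    induction m with
    | zero => intro a; simp [Equiv.swap_self]; exact one_mem _
    | succ k ih =>
        intro a
        have h1 := ih a
        have h2 := adjacent_swap_mem (a + k)
        have := swap_trans_closure _ h1 h2
        convert this using 2
        push_cast; ring
  rcases le_total a b with h | h
  · have : b = a + ((b - a).toNat : ℤ) := by omega
    rw [this]; exact main _ a
  · rw [show Equiv.swap a b = Equiv.swap b (b + ((a - b).toNat : ℤ)) from by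
      rw [Equiv.swap_comm]; congr 1; omega]
    exact main _ b

/-- The subgroup of `Sym(ℤ)` generated by the translation `x : i ↦ i + 1`
and the transposition `y = (0 1)` consists exactly of the almost-translations: the
permutations `σ` such that `σ(i) = i + k` for some fixed `k` and all but finitely many `i`. -/
theorem closure_translation_swap_eq_almost_translations
    (x y : Equiv.Perm ℤ) (hx : x = Equiv.addRight (1 : ℤ)) (hy : y = Equiv.swap 0 1) :
    ∀ σ : Equiv.Perm ℤ,
      σ ∈ Subgroup.closure
          ({x, y} : Set (Equiv.Perm ℤ)) ↔
        ∃ k : ℤ, {i : ℤ | σ i ≠ i + k}.Finite := by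
  subst hx hy
  set S : Set (Equiv.Perm ℤ) := {Equiv.addRight (1:ℤ), Equiv.swap 0 1} with hS
  intro σ
  constructor
  · intro hσ
    induction hσ using Subgroup.closure_induction with
    | mem g hg =>
        rcases hg with rfl | rfl
        · exact ⟨1, by simp⟩
        · exact ⟨0, Set.Finite.subset (Set.toFinite {0,1}) (by
            intro i hi
            simp only [Set.mem_setOf_eq, add_zero] at hi
            by_contra h
            simp only [Set.mem_insert_iff, Set.mem_singleton_iff] at h
            push_neg at h
            exact hi (Equiv.swap_apply_of_ne_of_ne h.1 h.2))⟩
    | one => exact ⟨0, by simp⟩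
    | mul g h' _ _ hg hh =>
        obtain ⟨k, hk⟩ := hg
        obtain ⟨l, hl⟩ := hh
        refine ⟨l + k, ?_⟩
        have hsub : {i : ℤ | (g * h') i ≠ i + (l + k)} ⊆
            {i : ℤ | h' i ≠ i + l} ∪ (fun i => i - l) '' {i : ℤ | g i ≠ i + k} := by
          intro i hi
          simp only [Set.mem_setOf_eq, Equiv.Perm.mul_apply] at hi
          by_contra hcon
          simp only [Set.mem_union, Set.mem_setOf_eq, Set.mem_image, not_or, not_exists] at hcon
          push_neg at hcon
          obtain ⟨h1, h2⟩ := hcon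
          have h3 : h' i = i + l := h1
          have h4 := h2 (i + l)
          have : g (i + l) = i + l + k := by
            by_contra hc
            exact (h4 hc) (by ring)
          rw [h3, this] at hi
          exact hi (by ring)
        exact Set.Finite.subset (hl.union (hk.image _)) hsub
    | inv g _ hg =>
        obtain ⟨k, hk⟩ := hg
        refine ⟨-k, Set.Finite.subset (hk.image g) ?_⟩
        intro i hi
        simp only [Set.mem_setOf_eq] at hi
        refine ⟨g.symm i, ?_, by simp⟩
        simp only [Set.mem_setOf_eq]
        intro hc
        apply hi
        have h2 : i = g.symm i + k := by
          conv_lhs => rw [← Equiv.apply_symm_apply g i, hc]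
        have h3 : g⁻¹ i = g.symm i := rfl
        rw [h3]; omega
  · rintro ⟨k, hk⟩
    have hxk : (Equiv.addRight (1:ℤ)) ^ k ∈ Subgroup.closure S :=
      zpow_mem (subset_closure (by simp [hS])) k
    have hxk_eq : (Equiv.addRight (1:ℤ)) ^ k = Equiv.addRight k := by simp
    set τ : Equiv.Perm ℤ := σ * ((Equiv.addRight (1:ℤ)) ^ k)⁻¹ with hτ
    have hτ_apply : ∀ i, τ i = σ (i - k) := by
      intro i; simp [hτ, hxk_eq, Equiv.Perm.mul_apply, sub_eq_add_neg]
    have hfin : (MulAction.fixedBy ℤ τ)ᶜ.Finite := by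
      apply Set.Finite.subset (hk.image (· + k))
      intro i hi
      simp only [Set.mem_compl_iff, MulAction.mem_fixedBy, Equiv.Perm.smul_def] at hi
      refine ⟨i - k, ?_, by ring⟩
      simp only [Set.mem_setOf_eq]
      rw [hτ_apply] at hi
      intro hc; apply hi; rw [hc]; ring
    have hτ_mem : τ ∈ Subgroup.closure S := by
      have h1 : τ ∈ Subgroup.closure {σ : Equiv.Perm ℤ | σ.IsSwap} :=
        mem_closure_isSwap'.mpr hfin
      have h2 : Subgroup.closure {σ : Equiv.Perm ℤ | σ.IsSwap} ≤ Subgroup.closure S := by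
        rw [Subgroup.closure_le]
        rintro f ⟨a, b, -, rfl⟩
        exact swap_mem a b
      exact h2 h1
    have : σ = τ * (Equiv.addRight (1:ℤ)) ^ k := by
      rw [hτ]; group
    rw [this]
    exact mul_mem hτ_mem hxk
end

section
/- Let φ : F₂ → Sym(ℤ) be the group homomorphism from the free group on two generators a, b determined by φ(a) = (i ↦ i + 1) and φ(b) = the transposition swapping 0 and 1, and let N = φ⁻¹({σ ∈ Sym(ℤ) | σ(0) = 0}) be the preimage of the stabilizer of 0. Then (i) N is a maximal subgroup of F₂; (ii) N is not a normal subgroup of F₂; and (iii) there is a surjective group homomorphism from N onto the free group F_∞ of countably infinite rank. -/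
/-!
The image of `φ` contains the translation `i ↦ i + 1` and `(0 1)`, hence every transposition
of `ℤ`. So the stabilizer of `0` in the image acts transitively on `ℤ ∖ {0}`, which makes the
point stabilizer maximal; conjugating `(1 2)` by `(0 1)` shows that it is not normal.

For the epimorphism, lift `φ` to the unrestricted wreath product `(ℤ → F_∞) ⋊ Sym(ℤ)`, sending
`b` to `(F, (0 1))` for a function `F` that hits every generator of `F_∞`. On elements fixing `0`
the coordinate at `0` is multiplicative, and for `k ≥ 2` the conjugate `a⁻ᵏ b aᵏ` fixes `0` and
has coordinate `F k` there.
-/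

open Equiv MulAction SemidirectProduct

section PermutationRepresentation

variable {G α : Type*} [Group G] (ρ : G →* Perm α)

theorem isCoatom_comap_stabilizer {a : α} (hmove : ∃ g, ρ g a ≠ a)
    (htrans : ∀ x y, x ≠ a → y ≠ a → ∃ g, ρ g a = a ∧ ρ g x = y) :
    IsCoatom ((stabilizer (Perm α) a).comap ρ) := by
  have mem_iff (g : G) : g ∈ (stabilizer (Perm α) a).comap ρ ↔ ρ g a = a := Iff.rfl
  refine ⟨fun htop => ?_, fun H hlt => ?_⟩
  · obtain ⟨g, hg⟩ := hmove
    exact hg ((mem_iff g).mp (htop ▸ Subgroup.mem_top g))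
  · obtain ⟨h, hH, hh⟩ := SetLike.exists_of_lt hlt
    refine eq_top_iff.mpr fun g _ => ?_
    by_cases hg : ρ g a = a
    · exact hlt.le hg
    obtain ⟨s, hsa, hs⟩ := htrans (ρ h a) (ρ g a) hh hg
    have hback : g⁻¹ * s * h ∈ H := hlt.le <| by simp [mem_iff, hs]
    simpa using H.mul_mem (H.mul_mem (hlt.le hsa) hH) (H.inv_mem hback)

variable [DecidableEq α] (hswap : ∀ x y : α, swap x y ∈ ρ.range)
include hswap

theorem isCoatom_comap_stabilizer_of_swap_mem_range [Nontrivial α] (a : α) :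
    IsCoatom ((stabilizer (Perm α) a).comap ρ) := by
  refine isCoatom_comap_stabilizer ρ ?_ fun x y hx hy => ?_
  · obtain ⟨b, hb⟩ := exists_ne a
    obtain ⟨g, hg⟩ := hswap a b
    exact ⟨g, by simpa [hg] using hb⟩
  · obtain ⟨g, hg⟩ := hswap x y
    exact ⟨g, by simp [hg, swap_apply_of_ne_of_ne hx.symm hy.symm], by simp [hg]⟩

theorem not_normal_comap_stabilizer_of_swap_mem_range {a b c : α} (hab : a ≠ b) (hac : a ≠ c)
    (hbc : b ≠ c) : ¬ ((stabilizer (Perm α) a).comap ρ).Normal := by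
  intro hN
  obtain ⟨g, hg⟩ := hswap b c
  obtain ⟨h, hh⟩ := hswap a b
  have hgN : g ∈ (stabilizer (Perm α) a).comap ρ := by
    simp [hg, swap_apply_of_ne_of_ne hab hac]
  have hconj : ρ (h * g * h⁻¹) = swap a c := by
    rw [map_mul, map_mul, map_inv, hg, hh, ← swap_apply_apply]
    simp [swap_apply_of_ne_of_ne hac.symm hbc.symm]
  have := hN.conj_mem g hgN h
  simp [hconj, hac.symm] at this

end PermutationRepresentation

theorem swap_mem_of_addRight_one_mem {H : Subgroup (Perm ℤ)} (hσ : Equiv.addRight 1 ∈ H)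
    (hτ : swap 0 1 ∈ H) (i j : ℤ) : swap i j ∈ H := by
  have adjacent (k : ℤ) : swap k (k + 1) ∈ H := by
    have hk : Equiv.addRight k ∈ H := by simpa using H.zpow_mem hσ k
    have : swap k (k + 1) = Equiv.addRight k * swap 0 1 * (Equiv.addRight k)⁻¹ := by
      rw [← swap_apply_apply]; simp [add_comm]
    exact this ▸ H.mul_mem (H.mul_mem hk hτ) (H.inv_mem hk)
  have far (n : ℕ) : ∀ i : ℤ, swap i (i + n + 1) ∈ H := by
    induction n with
    | zero => simpa using adjacent
    | succ n ih =>
      intro i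
      have hconj : swap i (i + (n + 1 : ℕ) + 1) =
          swap i (i + 1) * swap (i + 1) (i + 1 + n + 1) * (swap i (i + 1))⁻¹ := by
        rw [← swap_apply_apply, swap_apply_right, swap_apply_of_ne_of_ne (by omega) (by omega)]
        push_cast; ring_nf
      exact hconj ▸ H.mul_mem (H.mul_mem (adjacent i) (ih (i + 1))) (H.inv_mem (adjacent i))
  rcases lt_trichotomy i j with hij | hij | hij
  · obtain ⟨n, rfl⟩ : ∃ n : ℕ, j = i + n + 1 := ⟨(j - i - 1).toNat, by omega⟩
    exact far n i
  · rw [hij, swap_self]; exact H.one_mem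
  · obtain ⟨n, rfl⟩ : ∃ n : ℕ, i = j + n + 1 := ⟨(i - j - 1).toNat, by omega⟩
    rw [swap_comm]; exact far n j

section Wreath

variable {α K : Type*} [Group K]

def stabilizerCoord (a : α) :
    (stabilizer (Perm α) a).comap
      (rightHom : (α → K) ⋊[mulAutArrow] Perm α →* Perm α) →* K where
  toFun p := p.1.left a
  map_one' := rfl
  map_mul' p q := by
    have hp : p.1.right⁻¹ a = a := by
      rw [Perm.inv_eq_iff_eq]; exact p.2.symm
    show p.1.left a * q.1.left (p.1.right⁻¹ • a) = _
    rw [Perm.smul_def, hp]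

theorem left_inr_mul_mul_inr (π σ : Perm α) (p : (α → K) ⋊[mulAutArrow] Perm α) (x : α) :
    (inr π * p * inr σ).left x = p.left (π⁻¹ x) := by
  simp only [mul_left, left_inr, right_inr, map_one, mul_one, one_mul]
  rfl

end Wreath

theorem FreeGroup.surjective_of_of_mem_range {G ι : Type*} [Group G] (f : G →* FreeGroup ι)
    (h : ∀ i, FreeGroup.of i ∈ f.range) : Function.Surjective f := by
  rw [← MonoidHom.range_eq_top, eq_top_iff, ← FreeGroup.closure_range_of, Subgroup.closure_le]
  exact Set.range_subset_iff.mpr h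

theorem exists_surjective_comap_stabilizer_zero_freeGroup (φ : FreeGroup Bool →* Perm ℤ)
    (ha : φ (FreeGroup.of false) = Equiv.addRight 1) (hb : φ (FreeGroup.of true) = swap 0 1) :
    ∃ f : (stabilizer (Perm ℤ) (0 : ℤ)).comap φ →* FreeGroup ℕ, Function.Surjective f := by
  let F : ℤ → FreeGroup ℕ := fun i => FreeGroup.of (i - 2).toNat
  let Ψ : FreeGroup Bool →* (ℤ → FreeGroup ℕ) ⋊[mulAutArrow] Perm ℤ :=
    FreeGroup.lift fun x => if x then inl F * inr (swap 0 1) else inr (Equiv.addRight 1)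
  have hΨa (k : ℤ) : Ψ (FreeGroup.of false ^ k) = inr (Equiv.addRight k) := by
    rw [map_zpow, show Ψ (FreeGroup.of false) = inr (Equiv.addRight 1) by simp [Ψ], ← map_zpow]
    simp
  have hΨb : Ψ (FreeGroup.of true) = inl F * inr (swap 0 1) := by simp [Ψ]
  have hΨ : rightHom.comp Ψ = φ := FreeGroup.ext_hom _ _ fun x => by cases x <;> simp [Ψ, ha, hb]
  let ι : (stabilizer (Perm ℤ) (0 : ℤ)).comap φ →* (stabilizer (Perm ℤ) (0 : ℤ)).comap rightHom :=
    (Ψ.comp (Subgroup.subtype _)).codRestrict _ fun g => by simpa [← hΨ] using g.2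
  refine ⟨(stabilizerCoord 0).comp ι, FreeGroup.surjective_of_of_mem_range _ fun m => ?_⟩
  let k : ℤ := m + 2
  let g := FreeGroup.of false ^ (-k) * FreeGroup.of true * FreeGroup.of false ^ k
  have hg : g ∈ (stabilizer (Perm ℤ) (0 : ℤ)).comap φ := by
    have hfix : swap (0 : ℤ) 1 k = k := swap_apply_of_ne_of_ne (by omega) (by omega)
    simp [g, ha, hb, hfix]
  refine ⟨⟨g, hg⟩, ?_⟩
  show (Ψ g).left 0 = _
  rw [map_mul, map_mul, hΨa, hΨa, hΨb, left_inr_mul_mul_inr]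
  simp [F, k]

/-- Let `φ : F₂ → Sym(ℤ)` send the generator `a` (`= of false`) to the
translation `i ↦ i + 1` and the generator `b` (`= of true`) to the transposition `(0 1)`,
and let `N` be the preimage of the stabilizer of `0`. Then `N` is a non-normal maximal
subgroup of `F₂`, and `N` admits an epimorphism onto the free group of countably infinite
rank. -/
theorem stabilizer_preimage_maximal_nonnormal_free_quotient
    (φ : FreeGroup Bool →* Equiv.Perm ℤ)
    (ha : φ (FreeGroup.of false) = Equiv.addRight (1 : ℤ))
    (hb : φ (FreeGroup.of true) = Equiv.swap 0 1)
    (N : Subgroup (FreeGroup Bool))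
    (hN : N = Subgroup.comap φ (MulAction.stabilizer (Equiv.Perm ℤ) (0 : ℤ))) :
    IsCoatom N ∧ ¬ N.Normal ∧ ∃ f : N →* FreeGroup ℕ, Function.Surjective f := by
  subst hN
  have hswap : ∀ x y : ℤ, swap x y ∈ φ.range :=
    swap_mem_of_addRight_one_mem ⟨_, ha⟩ ⟨_, hb⟩
  exact ⟨isCoatom_comap_stabilizer_of_swap_mem_range φ hswap 0,
    not_normal_comap_stabilizer_of_swap_mem_range φ hswap (b := 1) (c := 2)
      (by decide) (by decide) (by decide),
    exists_surjective_comap_stabilizer_zero_freeGroup φ ha hb⟩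
end

section
/- Let q ≥ 2 be an even natural number, let x ∈ Sym(ℤ) be the translation i ↦ i + 1, and let y ∈ Sym(ℤ) be the q-cycle (1, 2, …, q), i.e. the permutation with y(i) = i + 1 for 1 ≤ i ≤ q − 1, y(q) = 1, and y(i) = i for all other i. Then the subgroup of Sym(ℤ) generated by {x, y} is exactly the group of almost-translations: a permutation σ of ℤ lies in this subgroup if and only if there exists k ∈ ℤ such that the set {i ∈ ℤ | σ(i) ≠ i + k} is finite. -/
/-!
The commutator of `y = (1 2 … q)` with the translation `x` is the 3-cycle `(1 2 q+1)`; conjugating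
it by `x` and by itself yields `(1 2 3)`, and then every 3-cycle of consecutive integers. Multiplying
`y` by such 3-cycles shortens it by two points at a time, so, `q` being even, `(1 2)` lies in the
group, hence every transposition and every finitely supported permutation does. An
almost-translation with shift `k` is a finitely supported permutation times `x ^ k`; conversely
`x` and `y` are almost-translations, and these form a subgroup.
-/

open Equiv Equiv.Perm
open scoped commutatorElement

section AlmostTranslations

variable {α : Type*} [AddGroup α]

def almostTranslations : Subgroup (Perm α) where
  carrier := {σ | ∃ k : α, {i | σ i ≠ i + k}.Finite}
  one_mem' := ⟨0, by simp⟩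
  mul_mem' := by
    rintro σ τ ⟨k, hk⟩ ⟨l, hl⟩
    refine ⟨l + k, (hl.union (hk.preimage τ.injective.injOn)).subset fun i hi => ?_⟩
    by_contra h
    simp only [Set.mem_union, Set.mem_ofPred_eq, Set.mem_preimage, not_or, not_not] at h
    exact hi (by rw [Perm.mul_apply, h.2, h.1, add_assoc])
  inv_mem' := by
    rintro σ ⟨k, hk⟩
    refine ⟨-k, (hk.image σ).subset fun i hi => ⟨σ⁻¹ i, fun h => hi ?_, σ.apply_symm_apply i⟩⟩
    simp only [Perm.coe_inv, apply_symm_apply] at h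
    exact eq_add_neg_of_add_eq h.symm

theorem mem_almostTranslations {σ : Perm α} :
    σ ∈ almostTranslations ↔ ∃ k : α, {i | σ i ≠ i + k}.Finite :=
  Iff.rfl

theorem addRight_mem_almostTranslations (k : α) : Equiv.addRight k ∈ almostTranslations :=
  ⟨k, by simp⟩

theorem mem_almostTranslations_of_finite {σ : Perm α} (hσ : {i | σ i ≠ i}.Finite) :
    σ ∈ almostTranslations :=
  ⟨0, by simpa using hσ⟩

theorem finite_mul_addRight_neg {σ : Perm α} {k : α} (hk : {i | σ i ≠ i + k}.Finite) :
    {i | (σ * Equiv.addRight (-k)) i ≠ i}.Finite := by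
  refine (hk.preimage (add_left_injective (-k)).injOn).subset fun i hi => ?_
  simpa using hi

end AlmostTranslations

theorem mem_of_finite_of_swap_mem {α : Type*} [DecidableEq α] {H : Subgroup (Perm α)}
    (hswap : ∀ a b : α, swap a b ∈ H) {σ : Perm α} (hσ : {i | σ i ≠ i}.Finite) : σ ∈ H :=
  (Subgroup.closure_le H).2 (by rintro _ ⟨a, b, -, rfl⟩; exact hswap a b)
    (mem_closure_isSwap'.2 hσ)

section ThreeCycle

variable {α : Type*} [DecidableEq α]

/-- The 3-cycle `a ↦ b ↦ c ↦ a`. -/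
def threeCycle (a b c : α) : Perm α :=
  swap a b * swap b c

theorem threeCycle_conj (σ : Perm α) (a b c : α) :
    σ * threeCycle a b c * σ⁻¹ = threeCycle (σ a) (σ b) (σ c) := by
  simp only [threeCycle, swap_apply_apply]
  group

theorem threeCycle_inv (a b c : α) : (threeCycle a b c)⁻¹ = swap b c * swap a b := by
  simp [threeCycle]

theorem threeCycle_conj_mem {H : Subgroup (Perm α)} {σ : Perm α} (hσ : σ ∈ H) {a b c : α}
    (h : threeCycle a b c ∈ H) : threeCycle (σ a) (σ b) (σ c) ∈ H := by
  rw [← threeCycle_conj]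
  exact mul_mem (mul_mem hσ h) (inv_mem hσ)

end ThreeCycle

theorem swap_conj_mem {α : Type*} [DecidableEq α] {H : Subgroup (Perm α)} {σ : Perm α}
    (hσ : σ ∈ H) {a b : α} (h : swap a b ∈ H) : swap (σ a) (σ b) ∈ H := by
  rw [swap_apply_apply]
  exact mul_mem (mul_mem hσ h) (inv_mem hσ)

def IsCycleOneTo (s : Perm ℤ) (m : ℤ) : Prop :=
  ∀ i, s i = if 1 ≤ i ∧ i < m then i + 1 else if i = m then 1 else i

namespace IsCycleOneTo

variable {s : Perm ℤ} {m : ℤ}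

theorem of_apply (h₁ : ∀ i : ℤ, 1 ≤ i → i ≤ m - 1 → s i = i + 1) (h₂ : s m = 1)
    (h₃ : ∀ i : ℤ, i < 1 ∨ m < i → s i = i) : IsCycleOneTo s m := by
  intro i
  split_ifs with hi hm
  · exact h₁ i hi.1 (by omega)
  · rwa [hm]
  · exact h₃ i (by omega)

theorem finite_support (hs : IsCycleOneTo s m) : {i | s i ≠ i}.Finite := by
  refine ((Set.finite_Icc 1 m).insert m).subset fun i hi => ?_
  have := hs i
  simp only [Set.mem_ofPred_eq, Set.mem_insert_iff, Set.mem_Icc] at hi ⊢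
  split_ifs at this <;> omega

theorem commutator_addRight (hs : IsCycleOneTo s m) (hm : 2 ≤ m) :
    ⁅s, Equiv.addRight 1⁆ = threeCycle 1 2 (m + 1) := by
  rw [commutatorElement_def, mul_inv_eq_iff_eq_mul, mul_inv_eq_iff_eq_mul]
  ext i
  unfold IsCycleOneTo at hs
  simp only [Perm.mul_apply, coe_addRight, hs, threeCycle, swap_apply_def]
  split_ifs <;> omega

theorem mul_threeCycle_inv (hs : IsCycleOneTo s (m + 2)) (hm : 1 ≤ m) :
    IsCycleOneTo (s * (threeCycle m (m + 1) (m + 2))⁻¹) m := by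
  unfold IsCycleOneTo at hs ⊢
  intro i
  simp only [threeCycle_inv, Perm.mul_apply, hs, swap_apply_def]
  split_ifs <;> omega

theorem eq_swap (hs : IsCycleOneTo s 2) : s = swap 1 2 := by
  ext i
  rw [hs, swap_apply_def]
  split_ifs <;> omega

end IsCycleOneTo

section TranslationInvariant

variable {H : Subgroup (Perm ℤ)} (hx : Equiv.addRight 1 ∈ H)
include hx

theorem threeCycle_one_two_three_mem {m : ℤ} (hm : 2 ≤ m) (hα : threeCycle 1 2 (m + 1) ∈ H) :
    threeCycle 1 2 3 ∈ H := by
  obtain rfl | hm := hm.eq_or_lt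
  · exact hα
  have hβ : threeCycle 2 3 (m + 2) ∈ H := by
    convert threeCycle_conj_mem hx hα using 2 <;> simp [add_assoc]
  have hγ : threeCycle (m + 1) 3 (m + 2) ∈ H := by
    convert threeCycle_conj_mem hα hβ using 2 <;> simp [threeCycle, swap_apply_def] <;> omega
  convert threeCycle_conj_mem hγ hα using 2 <;> simp [threeCycle, swap_apply_def] <;> omega

theorem threeCycle_consecutive_mem (h : threeCycle 1 2 3 ∈ H) (n : ℤ) :
    threeCycle n (n + 1) (n + 2) ∈ H := by
  convert threeCycle_conj_mem (zpow_mem hx (n - 1)) h using 2 <;> simp <;> ring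

theorem swap_mem_of_swap_one_two_mem (h : swap 1 2 ∈ H) (a b : ℤ) : swap a b ∈ H := by
  have hadj (n : ℤ) : swap n (n + 1) ∈ H := by
    convert swap_conj_mem (zpow_mem hx (n - 1)) h using 2 <;> simp
    ring
  have hle (a b : ℤ) (hab : a ≤ b) : swap a b ∈ H := by
    induction b, hab using Int.leInduction with
    | base => rw [swap_self, ← Perm.one_def]; exact H.one_mem
    | succ n _ ih => exact SubmonoidClass.swap_mem_trans H ih (hadj n)
  rcases le_total a b with hab | hba
  · exact hle a b hab
  · rw [swap_comm]
    exact hle b a hba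

theorem almostTranslations_le (hswap : ∀ a b : ℤ, swap a b ∈ H) : almostTranslations ≤ H := by
  rintro σ ⟨k, hk⟩
  have hfin := mem_of_finite_of_swap_mem hswap (finite_mul_addRight_neg hk)
  simpa [mul_assoc, ← addRight_add] using mul_mem hfin (zpow_mem hx k)

end TranslationInvariant

theorem swap_one_two_mem {H : Subgroup (Perm ℤ)}
    (h3 : ∀ n : ℤ, threeCycle n (n + 1) (n + 2) ∈ H) {s : Perm ℤ} (hsH : s ∈ H) (k : ℕ)
    (hs : IsCycleOneTo s (2 * k + 2)) : swap 1 2 ∈ H := by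
  induction k generalizing s with
  | zero => simpa [(show IsCycleOneTo s 2 by simpa using hs).eq_swap] using hsH
  | succ k ih =>
    have hs' : IsCycleOneTo s ((2 * k + 2) + 2) := by convert hs using 2; push_cast; ring
    exact ih (mul_mem hsH (inv_mem (h3 _))) (hs'.mul_threeCycle_inv (by omega))

/-- For even `q ≥ 2`, the subgroup of `Sym(ℤ)` generated by the
translation `x : i ↦ i + 1` and the `q`-cycle `y = (1 2 … q)` consists exactly of the
almost-translations. -/
theorem closure_translation_cycle_eq_almost_translations
    (q : ℕ) (hq : 2 ≤ q) (hqeven : 2 ∣ q)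
    (x y : Equiv.Perm ℤ) (hx : x = Equiv.addRight (1 : ℤ))
    (hy₁ : ∀ i : ℤ, 1 ≤ i → i ≤ (q : ℤ) - 1 → y i = i + 1)
    (hy₂ : y (q : ℤ) = 1)
    (hy₃ : ∀ i : ℤ, i < 1 ∨ (q : ℤ) < i → y i = i) :
    ∀ σ : Equiv.Perm ℤ,
      σ ∈ Subgroup.closure ({x, y} : Set (Equiv.Perm ℤ)) ↔
        ∃ k : ℤ, {i : ℤ | σ i ≠ i + k}.Finite := by
  subst hx
  have hy : IsCycleOneTo y q := .of_apply hy₁ hy₂ hy₃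
  set H := Subgroup.closure ({Equiv.addRight 1, y} : Set (Perm ℤ))
  have hxH : Equiv.addRight 1 ∈ H := Subgroup.subset_closure (Set.mem_insert _ _)
  have hyH : y ∈ H := Subgroup.subset_closure (Set.mem_insert_of_mem _ rfl)
  have hαH : threeCycle 1 2 ((q : ℤ) + 1) ∈ H := by
    rw [← hy.commutator_addRight (by omega), commutatorElement_def]
    exact mul_mem (mul_mem (mul_mem hyH hxH) (inv_mem hyH)) (inv_mem hxH)
  have h3 := threeCycle_consecutive_mem hxH (threeCycle_one_two_three_mem hxH (by omega) hαH)
  obtain ⟨k, rfl⟩ := hqeven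
  have h12 : swap 1 2 ∈ H := swap_one_two_mem h3 hyH (k - 1) (by convert hy using 2; omega)
  have hH : H = almostTranslations := by
    refine le_antisymm ((Subgroup.closure_le _).2 ?_)
      (almostTranslations_le hxH (swap_mem_of_swap_one_two_mem hxH h12))
    exact Set.insert_subset (addRight_mem_almostTranslations 1)
      (Set.singleton_subset_iff.2 (mem_almostTranslations_of_finite hy.finite_support))
  intro σ
  rw [hH, mem_almostTranslations]
end

section
/- Let q ≥ 2 be a natural number, let x ∈ Sym(ℤ) be the translation i ↦ i + 1, and let y ∈ Sym(ℤ) be the q-cycle (1, 2, …, q), i.e. the permutation with y(i) = i + 1 for 1 ≤ i ≤ q − 1, y(q) = 1, and y(i) = i for all other i. Then every finite group A is isomorphic to a subgroup of the subgroup of Sym(ℤ) generated by {x, y}; that is, there is an injective group homomorphism from A into the subgroup generated by x and y. -/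
/-! Conjugating the `q`-cycle `y` by the translation `x` gives the cycle `(2 … q+1)`, so
`y⁻¹ · x y x⁻¹` is a 3-cycle; conjugating it by `y` turns it into a 3-cycle on three consecutive
integers, a product `(k+1 k+2)(k k+1)` of adjacent transpositions. Translating by powers of `x`
and chaining, `⟨x, y⟩` contains every `(k k+1)(l l+1)`, and then, by conjugating transpositions
into one another, every product of two transpositions. A finite group `A` embeds into `Sym(A)`
(Cayley); doubling a permutation `σ` to `σ ⊔ σ` on `A ⊕ A` makes it a product of double
transpositions, and `A ⊕ A` embeds into `ℤ`. -/

open Equiv Equiv.Perm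

section DoubleTranspositions

variable {α : Type*} [DecidableEq α] {H : Subgroup (Perm α)}

theorem swap_mul_swap_mem_conj {g : Perm α} (hg : g ∈ H) {a b c d : α}
    (h : swap a b * swap c d ∈ H) : swap (g a) (g b) * swap (g c) (g d) ∈ H := by
  rw [swap_apply_apply, swap_apply_apply]
  simpa [mul_assoc] using H.mul_mem (H.mul_mem hg h) (H.inv_mem hg)

theorem swap_mul_swap_mem_symm {a b c d : α} (h : swap a b * swap c d ∈ H) :
    swap c d * swap a b ∈ H := by
  simpa using H.inv_mem h

theorem swap_mul_swap_mem_trans {a b c d e f : α} (h₁ : swap a b * swap c d ∈ H)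
    (h₂ : swap c d * swap e f ∈ H) : swap a b * swap e f ∈ H := by
  simpa [mul_assoc] using H.mul_mem h₁ h₂

theorem swap_mul_swap_mem_of_swap_conj {a b c d u v : α} (h₁ : swap a b * swap c d ∈ H)
    (h₂ : swap a b * swap u v ∈ H) :
    swap (swap a b c) (swap a b d) * swap u v ∈ H := by
  -- with `s = swap a b`: `s * swap c d * s * swap u v = (s * swap c d) * (s * swap u v)`
  rw [swap_apply_apply, swap_inv]
  simpa [mul_assoc] using H.mul_mem h₁ h₂

theorem viaEmbedding_swap {β : Type*} [DecidableEq β] (f : β ↪ α) (u v : β) :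
    (swap u v).viaEmbedding f = swap (f u) (f v) := by
  ext i
  by_cases hi : i ∈ Set.range f
  · obtain ⟨z, rfl⟩ := hi
    rw [viaEmbedding_apply, ← f.injective.swap_apply]
  · rw [viaEmbedding_apply_of_notMem _ _ _ hi,
      swap_apply_of_ne_of_ne (fun h => hi ⟨u, h.symm⟩) (fun h => hi ⟨v, h.symm⟩)]

theorem viaEmbedding_sumCongr_mem {β : Type*} [DecidableEq β] [Finite β]
    (hH : ∀ a b c d : α, a ≠ b → c ≠ d → swap a b * swap c d ∈ H) (f : β ⊕ β ↪ α)
    (σ : Perm β) : (σ.sumCongr σ).viaEmbedding f ∈ H := by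
  induction σ using swap_induction_on with
  | one => simp [← viaEmbeddingHom_apply]
  | swap_mul τ u v huv hτ =>
    have hsplit : (swap u v * τ).sumCongr (swap u v * τ)
        = swap (Sum.inl u) (Sum.inl v) * swap (Sum.inr u) (Sum.inr v) * τ.sumCongr τ := by
      rw [← sumCongr_swap_refl, ← sumCongr_refl_swap, sumCongr_mul, sumCongr_mul]
      rfl
    rw [← viaEmbeddingHom_apply] at hτ ⊢
    rw [hsplit, map_mul, map_mul, viaEmbeddingHom_apply, viaEmbeddingHom_apply,
      viaEmbedding_swap, viaEmbedding_swap]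
    refine H.mul_mem (hH _ _ _ _ ?_ ?_) hτ <;> simpa using huv

theorem exists_injective_hom_of_swap_mul_swap_mem [Infinite α]
    (hH : ∀ a b c d : α, a ≠ b → c ≠ d → swap a b * swap c d ∈ H)
    (A : Type*) [Group A] [Finite A] : ∃ φ : A →* H, Function.Injective φ := by
  classical
  have := Fintype.ofFinite A
  let f : A ⊕ A ↪ α :=
    (Fintype.equivFin _).toEmbedding.trans (Fin.valEmbedding.trans (Infinite.natEmbedding α))
  let double : Perm A →* Perm α :=
    (viaEmbeddingHom f).comp ((sumCongrHom A A).comp ((MonoidHom.id _).prod (MonoidHom.id _)))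
  have hdouble : Function.Injective double :=
    (viaEmbeddingHom_injective f).comp
      (sumCongrHom_injective.comp fun _ _ h => congrArg Prod.fst h)
  let cayley : A →* Perm A := MulAction.toPermHom A A
  refine ⟨(double.comp cayley).codRestrict H fun a => viaEmbedding_sumCongr_mem hH f _, ?_⟩
  intro a b hab
  exact (hdouble.comp MulAction.toPerm_injective) (congrArg Subtype.val hab)

end DoubleTranspositions

namespace Int

variable {H : Subgroup (Perm ℤ)}

theorem addRight_one_zpow_apply (k i : ℤ) : (Equiv.addRight (1 : ℤ) ^ k) i = i + k := by
  induction k using Int.induction_on generalizing i with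
  | zero => simp
  | succ n ih => rw [zpow_add_one, Perm.mul_apply, ih]; simp; ring
  | pred n ih => rw [zpow_sub_one, Perm.mul_apply, ih]; simp; ring

theorem swap_add_one_mul_swap_add_one_mem (h₁ : Equiv.addRight 1 ∈ H) {a : ℤ}
    (h₂ : swap (a + 1) (a + 2) * swap a (a + 1) ∈ H) (k l : ℤ) :
    swap k (k + 1) * swap l (l + 1) ∈ H := by
  have hstep (m : ℤ) : swap (m + 1) (m + 2) * swap m (m + 1) ∈ H := by
    have := swap_mul_swap_mem_conj (H.zpow_mem h₁ (m - a)) h₂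
    simp only [addRight_one_zpow_apply] at this
    convert this using 3 <;> ring
  suffices ∀ n : ℤ, swap k (k + 1) * swap (k + n) (k + n + 1) ∈ H by simpa using this (l - k)
  intro n
  induction n using Int.induction_on with
  | zero => simp
  | succ n ih =>
    refine swap_mul_swap_mem_trans ih (swap_mul_swap_mem_symm ?_)
    convert hstep (k + n) using 3 <;> ring
  | pred n ih =>
    refine swap_mul_swap_mem_trans ih ?_
    convert hstep (k + (-n - 1)) using 3 <;> ring

theorem swap_mul_swap_mem_of_adjacent (h : ∀ k l : ℤ, swap k (k + 1) * swap l (l + 1) ∈ H)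
    (a b c d : ℤ) (hab : a ≠ b) (hcd : c ≠ d) : swap a b * swap c d ∈ H := by
  have hfar (n : ℕ) (a : ℤ) : swap a (a + n + 1) * swap 0 1 ∈ H := by
    induction n with
    | zero => simpa using h a 0
    | succ n ih =>
      have hs : swap (a + n + 1) (a + n + 2) * swap 0 1 ∈ H := by
        simpa [add_assoc] using h (a + n + 1) 0
      have := swap_mul_swap_mem_of_swap_conj
        (swap_mul_swap_mem_trans hs (swap_mul_swap_mem_symm ih)) hs
      rw [swap_apply_of_ne_of_ne (by omega) (by omega), swap_apply_left] at this
      convert this using 3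
      push_cast
      ring
  have hany {a b : ℤ} (hab : a ≠ b) : swap a b * swap 0 1 ∈ H := by
    rcases hab.lt_or_gt with hlt | hgt
    · have := hfar (b - a - 1).toNat a
      rwa [show a + (b - a - 1).toNat + 1 = b by omega] at this
    · have := hfar (a - b - 1).toNat b
      rwa [show b + (a - b - 1).toNat + 1 = a by omega, swap_comm] at this
  exact swap_mul_swap_mem_trans (hany hab) (swap_mul_swap_mem_symm (hany hcd))

end Int

theorem swap_mul_swap_mem_closure_addRight_cycle {q : ℕ} (hq : 2 ≤ q) {y : Perm ℤ}
    (hy : ∀ i : ℤ, y i = if i = q then 1 else if 1 ≤ i ∧ i < q then i + 1 else i) :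
    swap (q : ℤ) (q + 1) * swap ((q : ℤ) - 1) q ∈
      Subgroup.closure ({Equiv.addRight 1, y} : Set (Perm ℤ)) := by
  set x : Perm ℤ := Equiv.addRight 1
  have hxy : x * y * x⁻¹ * y = y * y * (swap (q : ℤ) (q + 1) * swap ((q : ℤ) - 1) q) := by
    ext i
    simp only [x, Perm.mul_apply, Perm.inv_def, addRight_symm, coe_addRight, swap_apply_def]
    rw [hy i]
    split_ifs <;> simp only [hy] <;> split_ifs <;> omega
  rw [← inv_mul_eq_iff_eq_mul.mpr hxy]
  have hxH : x ∈ Subgroup.closure ({x, y} : Set (Perm ℤ)) := Subgroup.subset_closure (by simp)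
  have hyH : y ∈ Subgroup.closure ({x, y} : Set (Perm ℤ)) := Subgroup.subset_closure (by simp)
  exact Subgroup.mul_mem _ (Subgroup.inv_mem _ (Subgroup.mul_mem _ hyH hyH))
    (Subgroup.mul_mem _
      (Subgroup.mul_mem _ (Subgroup.mul_mem _ hxH hyH) (Subgroup.inv_mem _ hxH)) hyH)

/-- For `q ≥ 2`, every finite group embeds into the subgroup of `Sym(ℤ)`
generated by the translation `x : i ↦ i + 1` and the `q`-cycle `y = (1 2 … q)`. -/
theorem finite_group_embeds_in_closure_translation_cycle
    (q : ℕ) (hq : 2 ≤ q)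
    (x y : Equiv.Perm ℤ) (hx : x = Equiv.addRight (1 : ℤ))
    (hy₁ : ∀ i : ℤ, 1 ≤ i → i ≤ (q : ℤ) - 1 → y i = i + 1)
    (hy₂ : y (q : ℤ) = 1)
    (hy₃ : ∀ i : ℤ, i < 1 ∨ (q : ℤ) < i → y i = i) :
    ∀ (A : Type*) [Group A] [Finite A],
      ∃ f : A →* Subgroup.closure ({x, y} : Set (Equiv.Perm ℤ)),
        Function.Injective f := by
  subst hx
  have hy (i : ℤ) : y i = if i = q then 1 else if 1 ≤ i ∧ i < q then i + 1 else i := by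
    split_ifs with h₁ h₂
    · rw [h₁, hy₂]
    · exact hy₁ i h₂.1 (by omega)
    · exact hy₃ i (by omega)
  have hcycle := swap_mul_swap_mem_closure_addRight_cycle hq hy
  have hpair := Int.swap_mul_swap_mem_of_adjacent
    (Int.swap_add_one_mul_swap_add_one_mem (Subgroup.subset_closure (Set.mem_insert _ _))
      (a := (q : ℤ) - 1) (by convert hcycle using 3 <;> ring))
  exact fun A _ _ => exists_injective_hom_of_swap_mul_swap_mem hpair A
end
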